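/- arXiv:1904.01858 — 3 statements merged into one kernel-verified Lean document; each statement's English description precedes it below -/
import Mathlib

section
/- Let G be a finite abelian group and H a proper subgroup of G. Then H is a perfect code of G if and only if H₂ is a 2-pure subgroup of G₂, i.e. G₂² ∩ H₂ = H₂². -/
/-- The Cayley graph of a group `G` with connection set `S`: distinct vertices `x`, `y`
are adjacent iff `y * x⁻¹ ∈ S` (for inverse-closed `S` this relation is symmetric). -/
def cayley (G : Type*) [Group G] (S : Set G) : SimpleGraph G :=
  SimpleGraph.fromRel (fun x y => y * x⁻¹ ∈ S)

/-- `C` is a perfect code in the graph `Γ`: `C` is an independent set and every vertex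
outside `C` is adjacent to exactly one vertex of `C`. -/
def IsPerfectCode {V : Type*} (Γ : SimpleGraph V) (C : Set V) : Prop :=
  (∀ u ∈ C, ∀ v ∈ C, ¬ Γ.Adj u v) ∧ ∀ v ∉ C, ∃! u, u ∈ C ∧ Γ.Adj v u

/-- `C` is a perfect code of the group `G`: there is an inverse-closed `S ⊆ G` with
`1 ∉ S` such that `C` is a perfect code in `Cay(G, S)`. -/
def IsPerfectCodeOfGroup (G : Type*) [Group G] (C : Set G) : Prop :=
  ∃ S : Set G, S⁻¹ = S ∧ (1 : G) ∉ S ∧ IsPerfectCode (cayley G S) C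

/-- The Sylow `2`-subgroup of a finite abelian group: the subgroup of all elements
whose order is a power of `2`. -/
def sylowTwo (G : Type*) [CommGroup G] : Subgroup G :=
  haveI : Fact (Nat.Prime 2) := ⟨Nat.prime_two⟩
  CommGroup.primaryComponent G 2

/-!
If `H` is a perfect code in `Cay(G, S)` and `g ∉ H` has `g² ∈ H`, the unique neighbour `u ∈ H`
of `g` gives `t = g u⁻¹ ∈ S`; both `1` and `t²` are then neighbours of `t` in `H`, so `t² = 1`
and `g² = u²`: `H` is 2-pure in `G`. Conversely, 2-purity lets every involution of `G/H` lift to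
an involution of `G`, so `G → G/H` has a section `f` commuting with inversion, and
`S = f (G/H ∖ {1})` makes `H` a perfect code. Finally, 2-purity of `H` in `G` is equivalent to
2-purity of `H₂` in `G₂`, because some odd power `t = g ^ (2k+1)` lies in `G₂` and
`g = t (g²)⁻ᵏ`.
-/
def IsTwoPure {G : Type*} [Group G] (K H : Subgroup G) : Prop :=
  (fun g : G => g ^ 2) '' K ∩ H = (fun g : G => g ^ 2) '' H

theorem isTwoPure_iff {G : Type*} [Group G] {K H : Subgroup G} (hHK : H ≤ K) :
    IsTwoPure K H ↔ ∀ g ∈ K, g ^ 2 ∈ H → ∃ h ∈ H, g ^ 2 = h ^ 2 := by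
  have hsq : (fun g : G => g ^ 2) '' H ⊆ (fun g : G => g ^ 2) '' K ∩ H := by
    rintro _ ⟨h, hh, rfl⟩
    exact ⟨⟨h, hHK hh, rfl⟩, H.pow_mem hh 2⟩
  rw [IsTwoPure, ← hsq.ge_iff_eq']
  constructor
  · intro hsub g hg hg2
    obtain ⟨h, hh, hgh⟩ := hsub ⟨⟨g, hg, rfl⟩, hg2⟩
    exact ⟨h, hh, hgh.symm⟩
  · rintro hpure _ ⟨⟨g, hg, rfl⟩, hg2⟩
    obtain ⟨h, hh, hgh⟩ := hpure g hg hg2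
    exact ⟨h, hh, hgh.symm⟩

section Involution

variable {α β : Type*} [InvolutiveInv α] [InvolutiveInv β]

theorem exists_inv_section (π : α → β) (hπ : ∀ a, π a⁻¹ = (π a)⁻¹)
    (hlift : ∀ b, ∃ a, π a = b ∧ (b⁻¹ = b → a⁻¹ = a)) :
    ∃ f : β → α, (∀ b, π (f b) = b) ∧ ∀ b, f b⁻¹ = (f b)⁻¹ := by
  choose c hπc hc using hlift
  -- the order picks which point of each orbit `{b, b⁻¹}` is lifted directly
  let : LinearOrder β := WellOrderingRel.isWellOrder.linearOrder
  refine ⟨fun b => if b ≤ b⁻¹ then c b else (c b⁻¹)⁻¹, fun b => ?_, fun b => ?_⟩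
  · dsimp only
    split_ifs
    · exact hπc b
    · rw [hπ, hπc, inv_inv]
  · rcases lt_trichotomy b b⁻¹ with hlt | heq | hgt
    · simp [hlt.le, hlt.not_ge]
    · simp [← heq, hc b heq.symm]
    · simp [hgt.le, hgt.not_ge]

end Involution

section CayleyGraph

variable {G : Type*} [Group G]

theorem cayley_adj_iff {S : Set G} (hS : S⁻¹ = S) {x y : G} :
    (cayley G S).Adj x y ↔ x ≠ y ∧ y * x⁻¹ ∈ S := by
  have hsymm : x * y⁻¹ ∈ S ↔ y * x⁻¹ ∈ S := by
    conv_lhs => rw [← hS, Set.mem_inv, mul_inv_rev, inv_inv]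
  rw [cayley, SimpleGraph.fromRel_adj, hsymm, or_self]

theorem isPerfectCodeOfGroup_of_inv_section {H : Subgroup G} [H.Normal] (f : G ⧸ H → G)
    (hf : ∀ q, (f q : G ⧸ H) = q) (hinv : ∀ q, f q⁻¹ = (f q)⁻¹) :
    IsPerfectCodeOfGroup G H := by
  set S := f '' {1}ᶜ
  have hS : S⁻¹ = S := by
    ext x
    simp only [S, Set.mem_inv, Set.mem_image, Set.mem_compl_singleton_iff]
    constructor
    · rintro ⟨q, hq, hfq⟩
      exact ⟨q⁻¹, inv_ne_one.2 hq, by rw [hinv, hfq, inv_inv]⟩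
    · rintro ⟨q, hq, rfl⟩
      exact ⟨q⁻¹, inv_ne_one.2 hq, hinv q⟩
  have hS_disjoint : ∀ x ∈ S, x ∉ H := by
    rintro _ ⟨q, hq, rfl⟩ hx
    exact hq (by rw [← hf q, Set.mem_singleton_iff, QuotientGroup.eq_one_iff]; exact hx)
  refine ⟨S, hS, fun h1 => hS_disjoint 1 h1 H.one_mem, ?_, fun v hv => ?_⟩
  · intro u hu v hv hadj
    exact hS_disjoint _ ((cayley_adj_iff hS).1 hadj).2 (H.mul_mem hv (H.inv_mem hu))
  · have hv1 : (v : G ⧸ H)⁻¹ ≠ 1 := by rwa [inv_ne_one, ne_eq, QuotientGroup.eq_one_iff]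
    have hu : f (v : G ⧸ H)⁻¹ * v ∈ H := by
      rw [← QuotientGroup.eq_one_iff, QuotientGroup.mk_mul, hf, inv_mul_cancel]
    refine ⟨f (v : G ⧸ H)⁻¹ * v, ⟨hu, (cayley_adj_iff hS).2 ⟨?_, ?_⟩⟩, ?_⟩
    · intro hvu
      exact hv (hvu ▸ hu)
    · rw [mul_inv_cancel_right]
      exact ⟨_, hv1, rfl⟩
    · rintro w ⟨hw, hadj⟩
      obtain ⟨-, q, hq, hfq⟩ := (cayley_adj_iff hS).1 hadj
      have hq' : q = (v : G ⧸ H)⁻¹ := by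
        rw [← hf q, hfq, QuotientGroup.mk_mul, (QuotientGroup.eq_one_iff w).2 hw,
          QuotientGroup.mk_inv, one_mul]
      rw [← hq', hfq, inv_mul_cancel_right]

theorem sq_eq_one_of_isPerfectCode {S : Set G} (hS : S⁻¹ = S) (hS1 : (1 : G) ∉ S)
    {H : Subgroup G} (hH : IsPerfectCode (cayley G S) H) {t : G} (htS : t ∈ S) (htH : t ∉ H)
    (ht2 : t ^ 2 ∈ H) : t ^ 2 = 1 := by
  have ht1 : t ≠ 1 := ne_of_mem_of_not_mem htS hS1
  obtain ⟨w, -, huniq⟩ := hH.2 t htH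
  have hadj_one : (cayley G S).Adj t 1 := by
    refine (cayley_adj_iff hS).2 ⟨ht1, ?_⟩
    rwa [one_mul, ← Set.mem_inv, hS]
  have hadj_sq : (cayley G S).Adj t (t ^ 2) := by
    refine (cayley_adj_iff hS).2 ⟨?_, ?_⟩
    · rwa [sq, ne_eq, left_eq_mul]
    · rwa [sq, mul_inv_cancel_right]
  exact (huniq _ ⟨ht2, hadj_sq⟩).trans (huniq _ ⟨H.one_mem, hadj_one⟩).symm

end CayleyGraph

section CommGroup

variable {G : Type*} [CommGroup G] {H : Subgroup G}

theorem IsPerfectCodeOfGroup.exists_sq_eq_sq (hc : IsPerfectCodeOfGroup G H) {g : G}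
    (hg : g ^ 2 ∈ H) : ∃ h ∈ H, g ^ 2 = h ^ 2 := by
  by_cases hgH : g ∈ H
  · exact ⟨g, hgH, rfl⟩
  obtain ⟨S, hS, hS1, hcode⟩ := hc
  obtain ⟨u, ⟨hu, hadj⟩, -⟩ := hcode.2 g hgH
  set t := g * u⁻¹
  have htS : t ∈ S := by
    rw [← hS, Set.mem_inv, mul_inv_rev, inv_inv]
    exact ((cayley_adj_iff hS).1 hadj).2
  have htH : t ∉ H := fun ht => hgH (by simpa [t] using H.mul_mem ht hu)
  have ht2 : t ^ 2 ∈ H := by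
    rw [mul_pow]
    exact H.mul_mem hg (H.pow_mem (H.inv_mem hu) 2)
  refine ⟨u, hu, ?_⟩
  calc g ^ 2 = t ^ 2 * u ^ 2 := by rw [← mul_pow, inv_mul_cancel_right]
    _ = u ^ 2 := by rw [sq_eq_one_of_isPerfectCode hS hS1 hcode htS htH ht2, one_mul]

theorem exists_lift_inv_eq_of_sq_mem (hH : ∀ g : G, g ^ 2 ∈ H → ∃ h ∈ H, g ^ 2 = h ^ 2)
    (q : G ⧸ H) : ∃ g : G, (g : G ⧸ H) = q ∧ (q⁻¹ = q → g⁻¹ = g) := by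
  obtain ⟨g, rfl⟩ := QuotientGroup.mk_surjective q
  by_cases hq : (g : G ⧸ H)⁻¹ = g
  · have hg2 : g ^ 2 ∈ H := by
      rw [← QuotientGroup.eq_one_iff, QuotientGroup.mk_pow, sq, ← inv_eq_iff_mul_eq_one, hq]
    obtain ⟨h, hh, hgh⟩ := hH g hg2
    refine ⟨g * h⁻¹, by simp [hh], fun _ => inv_eq_of_mul_eq_one_right ?_⟩
    rw [← sq, mul_pow, hgh, inv_pow, mul_inv_cancel]
  · exact ⟨g, rfl, fun h => absurd h hq⟩

theorem isPerfectCodeOfGroup_of_sq_mem (hH : ∀ g : G, g ^ 2 ∈ H → ∃ h ∈ H, g ^ 2 = h ^ 2) :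
    IsPerfectCodeOfGroup G H := by
  obtain ⟨f, hf, hinv⟩ := exists_inv_section (QuotientGroup.mk : G → G ⧸ H)
    (fun _ => QuotientGroup.mk_inv _ _) (exists_lift_inv_eq_of_sq_mem hH)
  exact isPerfectCodeOfGroup_of_inv_section f hf hinv

theorem isPerfectCodeOfGroup_iff_isTwoPure_top :
    IsPerfectCodeOfGroup G H ↔ IsTwoPure ⊤ H := by
  simp only [isTwoPure_iff le_top, Subgroup.mem_top, true_imp_iff]
  exact ⟨fun hc _ => hc.exists_sq_eq_sq, isPerfectCodeOfGroup_of_sq_mem⟩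

theorem sq_mem_sylowTwo_iff {g : G} : g ^ 2 ∈ sylowTwo G ↔ g ∈ sylowTwo G := by
  refine ⟨fun ⟨k, hk⟩ => ⟨k + 1, ?_⟩, fun hg => pow_mem hg 2⟩
  rwa [pow_succ', pow_mul]

theorem IsOfFinOrder.exists_odd_pow_mem_sylowTwo {g : G} (hg : IsOfFinOrder g) :
    ∃ m, Odd m ∧ g ^ m ∈ sylowTwo G := by
  have hn : orderOf g ≠ 0 := hg.orderOf_pos.ne'
  refine ⟨ordCompl[2] (orderOf g), ?_, (orderOf g).factorization 2, ?_⟩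
  · exact Nat.odd_iff.2 (Nat.two_dvd_ne_zero.1 (Nat.not_dvd_ordCompl Nat.prime_two hn))
  · rw [← pow_mul, mul_comm, Nat.ordProj_mul_ordCompl_eq_self, pow_orderOf_eq_one]

theorem isTwoPure_top_iff_isTwoPure_sylowTwo [Finite G] :
    IsTwoPure ⊤ H ↔ IsTwoPure (sylowTwo G) (H ⊓ sylowTwo G) := by
  rw [isTwoPure_iff le_top, isTwoPure_iff inf_le_right]
  constructor
  · intro hpure g hg hg2
    obtain ⟨h, hh, hgh⟩ := hpure g trivial (Subgroup.mem_inf.1 hg2).1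
    exact ⟨h, ⟨hh, sq_mem_sylowTwo_iff.1 (hgh ▸ pow_mem hg 2)⟩, hgh⟩
  · rintro hpure g - hg2
    obtain ⟨_, ⟨k, rfl⟩, hgm⟩ := (isOfFinOrder_of_finite g).exists_odd_pow_mem_sylowTwo
    have ht2 : (g ^ (2 * k + 1)) ^ 2 ∈ H ⊓ sylowTwo G := by
      refine ⟨?_, pow_mem hgm 2⟩
      rw [← pow_mul, mul_comm, pow_mul]
      exact H.pow_mem hg2 _
    obtain ⟨b, hb, hbt⟩ := hpure _ hgm ht2
    refine ⟨b * ((g ^ 2) ^ k)⁻¹, H.mul_mem hb.1 (H.inv_mem (H.pow_mem hg2 k)), ?_⟩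
    calc g ^ 2 = (g ^ (2 * k + 1)) ^ 2 * (((g ^ 2) ^ k)⁻¹) ^ 2 := by group
      _ = _ := by rw [hbt, mul_pow]

end CommGroup

theorem perfect_code_iff_sylow_two_pure_general (G : Type*) [CommGroup G] [Fintype G]
    (H : Subgroup G) :
    IsPerfectCodeOfGroup G (H : Set G) ↔
      ((fun g : G => g ^ 2) '' (sylowTwo G : Set G)) ∩ ((H ⊓ sylowTwo G : Subgroup G) : Set G)
        = (fun g : G => g ^ 2) '' ((H ⊓ sylowTwo G : Subgroup G) : Set G) :=
  isPerfectCodeOfGroup_iff_isTwoPure_top.trans isTwoPure_top_iff_isTwoPure_sylowTwo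

/-- For a proper subgroup `H` of a finite abelian group `G`, `H` is a perfect code of
`G` iff `H₂` is a 2-pure subgroup of `G₂`, i.e. `G₂² ∩ H₂ = H₂²`. -/
theorem perfect_code_iff_sylow_two_pure (G : Type*) [CommGroup G] [Fintype G]
    (H : Subgroup G) (hH : H ≠ ⊤) :
    IsPerfectCodeOfGroup G (H : Set G) ↔
      ((fun g : G => g ^ 2) '' (sylowTwo G : Set G)) ∩ ((H ⊓ sylowTwo G : Subgroup G) : Set G)
        = (fun g : G => g ^ 2) '' ((H ⊓ sylowTwo G : Subgroup G) : Set G) :=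
  perfect_code_iff_sylow_two_pure_general G H
end

section
/- Let n ≥ 2 be an integer and t a positive integer dividing 2n, and let x, y be the standard generators of the generalized quaternion group Q_{4n}. Then the subgroup ⟨x^t⟩ of Q_{4n} is a perfect code of Q_{4n} if and only if 2n/t is odd. -/
/-!
For a normal subgroup `H` of `G`, `H` is a perfect code iff every coset `gH` with `g² ∈ H`
contains an element of order at most two (Huang–Xia–Zhou): such elements let one choose an
inverse-closed transversal `T` of `H`, and `T \ H` is then a connection set; conversely, if
`g ∉ H` is joined to `u ∈ H` by `s = g u⁻¹`, then `s⁻¹` joins `g` to `s g ∈ H`, so uniqueness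
forces `s² = 1`.

In `Q_{4n}` the element `y` squares to `x^n`, and every element outside `⟨x⟩` has order four.
If `2n/t` is even then `t ∣ n`, so `y² ∈ ⟨x^t⟩` while the coset `y⟨x^t⟩` has none.
If `2n/t` is odd then `y² ∉ ⟨x^t⟩`, and every coset `x^i⟨x^t⟩` with `x^{2i} ∈ ⟨x^t⟩` has one.
-/

section PerfectCode

variable {G : Type*} [Group G]

theorem cayley_adj_iff_mul_inv_mem {S : Set G} (hS : S⁻¹ = S) (h1 : (1 : G) ∉ S) {x y : G} :
    (cayley G S).Adj x y ↔ x * y⁻¹ ∈ S := by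
  have hinv : ∀ g, g⁻¹ ∈ S ↔ g ∈ S := fun g => by rw [← Set.mem_inv, hS]
  rw [cayley, SimpleGraph.fromRel_adj, ← hinv (x * y⁻¹), mul_inv_rev, inv_inv, or_self_iff]
  refine ⟨And.right, fun h => ⟨?_, h⟩⟩
  rintro rfl
  exact h1 (by rwa [mul_inv_cancel] at h)

theorem isPerfectCodeOfGroup_of_isComplement {H : Subgroup G} {T : Set G} (hT : T⁻¹ = T)
    (hTH : Subgroup.IsComplement T H) : IsPerfectCodeOfGroup G H := by
  have hS : (T \ H)⁻¹ = T \ H := by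
    ext g
    simp only [Set.mem_inv, Set.mem_sdiff, SetLike.mem_coe, inv_mem_iff]
    rw [← Set.mem_inv, hT]
  have h1 : (1 : G) ∉ T \ H := fun h => h.2 H.one_mem
  refine ⟨T \ H, hS, h1, ?_, ?_⟩
  · intro u hu v hv hadj
    rw [cayley_adj_iff_mul_inv_mem hS h1] at hadj
    exact hadj.2 (H.mul_mem hu (H.inv_mem hv))
  · intro v hv
    obtain ⟨⟨s, hsT⟩, hsv, huniq⟩ :=
      Subgroup.isComplement_iff_existsUnique_inv_mul_mem.mp hTH v
    refine ⟨s⁻¹ * v, ⟨hsv, ?_⟩, ?_⟩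
    · rw [cayley_adj_iff_mul_inv_mem hS h1, mul_inv_rev, inv_inv, mul_inv_cancel_left]
      exact ⟨hsT, fun hs => hv (by simpa using H.mul_mem hs hsv)⟩
    · rintro u ⟨hu, hadj⟩
      rw [cayley_adj_iff_mul_inv_mem hS h1] at hadj
      have hs : v * u⁻¹ = s := congrArg Subtype.val (huniq ⟨v * u⁻¹, hadj.1⟩ (by simpa using hu))
      rw [← hs]
      group

theorem IsPerfectCodeOfGroup.exists_mul_sq_eq_one {H : Subgroup G} [H.Normal]
    (hH : IsPerfectCodeOfGroup G H) {g : G} (hg : g ^ 2 ∈ H) : ∃ h ∈ H, (g * h) ^ 2 = 1 := by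
  by_cases hgH : g ∈ H
  · exact ⟨g⁻¹, H.inv_mem hgH, by simp⟩
  obtain ⟨S, hS, h1, -, hunique⟩ := hH
  obtain ⟨u, ⟨hu, hadj⟩, huniq⟩ := hunique g hgH
  rw [cayley_adj_iff_mul_inv_mem hS h1] at hadj
  have hu' : g * u⁻¹ * g ∈ H := by
    have := H.mul_mem (‹H.Normal›.conj_mem _ (H.inv_mem hu) g) hg
    rwa [pow_two, ← mul_assoc, inv_mul_cancel_right] at this
  have hadj' : g * (g * u⁻¹ * g)⁻¹ ∈ S := by
    rw [← Set.inv_mem_inv, hS] at hadj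
    convert hadj using 1
    group
  have := huniq _ ⟨hu', (cayley_adj_iff_mul_inv_mem hS h1).mpr hadj'⟩
  refine ⟨u⁻¹, H.inv_mem hu, ?_⟩
  rw [pow_two]
  nth_rw 2 [← this]
  group

/-- The range of a section `f` of `G → G ⧸ H` with `f q⁻¹ = (f q)⁻¹`: a well-order on `G ⧸ H`
picks one coset of each pair `{q, q⁻¹}`, and a self-inverse coset is represented by an element
of order at most two. -/
theorem exists_isComplement_inv_eq {H : Subgroup G} [H.Normal]
    (hsq : ∀ g : G, g ^ 2 ∈ H → ∃ h ∈ H, (g * h) ^ 2 = 1) :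
    ∃ T : Set G, T⁻¹ = T ∧ Subgroup.IsComplement T H := by
  have hrep : ∀ q : G ⧸ H, ∃ g : G, (g : G ⧸ H) = q ∧ (q⁻¹ = q → g ^ 2 = 1) := by
    intro q
    obtain ⟨g, rfl⟩ := QuotientGroup.mk_surjective q
    by_cases hq : (g : G ⧸ H)⁻¹ = g
    · have hg : g ^ 2 ∈ H := by
        rw [← QuotientGroup.eq_one_iff, QuotientGroup.mk_pow, pow_two]
        nth_rw 1 [← hq]
        exact inv_mul_cancel _
      obtain ⟨h, hh, hgh⟩ := hsq g hg
      exact ⟨g * h, by simpa using hh, fun _ => hgh⟩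
    · exact ⟨g, rfl, fun h => absurd h hq⟩
  choose r hr hr2 using hrep
  let _ : LinearOrder (G ⧸ H) := IsWellOrder.linearOrder WellOrderingRel
  let f : G ⧸ H → G := fun q => if q ≤ q⁻¹ then r q else (r q⁻¹)⁻¹
  have hf : ∀ q, (f q : G ⧸ H) = q := by
    intro q
    simp only [f]
    split_ifs
    · exact hr q
    · rw [QuotientGroup.mk_inv, hr, inv_inv]
  have hf_inv : ∀ q, f q⁻¹ = (f q)⁻¹ := by
    intro q
    simp only [f, inv_inv]
    rcases lt_trichotomy q q⁻¹ with hlt | heq | hgt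
    · rw [if_neg hlt.not_ge, if_pos hlt.le]
    · rw [← heq, if_pos le_rfl, eq_inv_iff_mul_eq_one, ← pow_two, hr2 q heq.symm]
    · rw [if_pos hgt.le, if_neg hgt.not_ge, inv_inv]
  refine ⟨Set.range f, ?_, Subgroup.isComplement_range_left hf⟩
  ext g
  simp only [Set.mem_inv, Set.mem_range]
  constructor
  · rintro ⟨q, hq⟩
    exact ⟨q⁻¹, by rw [hf_inv, hq, inv_inv]⟩
  · rintro ⟨q, rfl⟩
    exact ⟨q⁻¹, hf_inv q⟩

theorem isPerfectCodeOfGroup_iff_of_normal {H : Subgroup G} [H.Normal] :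
    IsPerfectCodeOfGroup G H ↔ ∀ g : G, g ^ 2 ∈ H → ∃ h ∈ H, (g * h) ^ 2 = 1 := by
  refine ⟨fun hH _ hg => hH.exists_mul_sq_eq_one hg, fun hsq => ?_⟩
  obtain ⟨T, hT, hTH⟩ := exists_isComplement_inv_eq hsq
  exact isPerfectCodeOfGroup_of_isComplement hT hTH

end PerfectCode

namespace QuaternionGroup

open Subgroup

variable {n t : ℕ}

@[simp]
theorem inv_a (i : ZMod (2 * n)) : (a i)⁻¹ = a (-i) :=
  rfl

@[simp]
theorem inv_xa (i : ZMod (2 * n)) : (xa i)⁻¹ = xa ((n : ZMod (2 * n)) + i) :=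
  rfl

theorem two_mul_natCast_eq_zero : 2 * (n : ZMod (2 * n)) = 0 := by
  exact_mod_cast ZMod.natCast_self (2 * n)

theorem a_one_zpow (k : ℤ) : (a 1 : QuaternionGroup n) ^ k = a k := by
  cases k with
  | ofNat k => simp
  | negSucc k => rw [zpow_negSucc, a_one_pow, inv_a, Int.cast_negSucc]

theorem mem_zpowers_a_one_pow_iff {g : QuaternionGroup n} :
    g ∈ zpowers (a 1 ^ t) ↔ ∃ k : ℤ, a ((t * k : ℤ) : ZMod (2 * n)) = g := by
  have hpow (k : ℤ) : (a 1 ^ t : QuaternionGroup n) ^ k = a ((t * k : ℤ) : ZMod (2 * n)) := by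
    rw [← zpow_natCast, ← zpow_mul, a_one_zpow]
  simp only [mem_zpowers_iff, hpow]

theorem a_intCast_mem_zpowers_a_one_pow_iff (htdvd : t ∣ 2 * n) (i : ℤ) :
    a (i : ZMod (2 * n)) ∈ zpowers (a 1 ^ t) ↔ (t : ℤ) ∣ i := by
  simp only [mem_zpowers_a_one_pow_iff, a.injEq, ZMod.intCast_eq_intCast_iff_dvd_sub]
  constructor
  · rintro ⟨k, hk⟩
    exact (dvd_sub_left (dvd_mul_right _ k)).mp ((Int.natCast_dvd_natCast.mpr htdvd).trans hk)
  · rintro ⟨k, rfl⟩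
    exact ⟨k, by simp⟩

instance normal_zpowers_a_one_pow : (zpowers (a 1 ^ t) : Subgroup (QuaternionGroup n)).Normal where
  conj_mem := by
    intro h hh g
    obtain ⟨k, rfl⟩ := mem_zpowers_a_one_pow_iff.mp hh
    rw [mem_zpowers_a_one_pow_iff]
    cases g with
    | a i => exact ⟨k, by simp⟩
    | xa i =>
      refine ⟨-k, congrArg a ?_⟩
      push_cast
      linear_combination -two_mul_natCast_eq_zero (n := n)

theorem exists_mul_sq_eq_one_of_odd [NeZero n] {m : ℕ} (hm : 2 * n = t * m) (hodd : Odd m)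
    {g : QuaternionGroup n} (hg : g ^ 2 ∈ zpowers (a 1 ^ t)) :
    ∃ h ∈ zpowers (a 1 ^ t), (g * h) ^ 2 = 1 := by
  have htdvd : t ∣ 2 * n := ⟨m, hm⟩
  obtain ⟨l, rfl⟩ := hodd
  have hm' : (2 * n : ℤ) = t * (2 * l + 1) := by exact_mod_cast hm
  cases g with
  | xa i =>
    rw [xa_sq, ← Int.cast_natCast, a_intCast_mem_zpowers_a_one_pow_iff htdvd] at hg
    obtain ⟨c, hc⟩ := hg
    have ht : (t : ℤ) ≠ 0 := by
      rintro ht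
      rw [ht, zero_mul] at hm'
      exact NeZero.ne n (by omega)
    have : (t : ℤ) * (2 * c) = t * (2 * l + 1) := by linear_combination hm' - 2 * hc
    have hodd : 2 * c = 2 * (l : ℤ) + 1 := mul_left_cancel₀ ht this
    omega
  | a i =>
    obtain ⟨i, rfl⟩ := ZMod.intCast_surjective i
    rw [sq, a_mul_a, ← Int.cast_add, a_intCast_mem_zpowers_a_one_pow_iff htdvd] at hg
    obtain ⟨c, hc⟩ := hg
    -- `2i = ct`, and `x ^ (n c)` lies in `x ^ i ⟨x ^ t⟩` and squares to `x ^ (2n c) = 1`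
    refine ⟨a ((n * c - i : ℤ) : ZMod (2 * n)),
      (a_intCast_mem_zpowers_a_one_pow_iff htdvd _).mpr ⟨l * c, ?_⟩, ?_⟩
    · exact mul_left_cancel₀ two_ne_zero (by linear_combination c * hm' - hc)
    · rw [sq, a_mul_a, a_mul_a, ← a_zero]
      push_cast
      congr 1
      linear_combination (c : ZMod (2 * n)) * two_mul_natCast_eq_zero

theorem exists_sq_mem_forall_mul_sq_ne_one [NeZero n] (htn : t ∣ n) :
    ∃ g : QuaternionGroup n, g ^ 2 ∈ zpowers (a 1 ^ t) ∧
      ∀ h ∈ zpowers (a 1 ^ t), (g * h) ^ 2 ≠ 1 := by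
  refine ⟨xa 0, ?_, fun h hh => ?_⟩
  · rw [xa_sq, ← Int.cast_natCast, a_intCast_mem_zpowers_a_one_pow_iff (htn.trans (dvd_mul_left n 2))]
    exact_mod_cast htn
  · obtain ⟨k, rfl⟩ := mem_zpowers_a_one_pow_iff.mp hh
    rw [xa_mul_a]
    exact pow_ne_one_of_lt_orderOf two_ne_zero (by rw [orderOf_xa]; norm_num)

end QuaternionGroup

theorem quaternion_cyclic_subgroup_perfect_code_iff_general (n : ℕ) (hn : 2 ≤ n)
    (t : ℕ) (htdvd : t ∣ 2 * n) :
    IsPerfectCodeOfGroup (QuaternionGroup n)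
        ((Subgroup.zpowers ((QuaternionGroup.a (1 : ZMod (2 * n))) ^ t)) : Set (QuaternionGroup n)) ↔
      Odd (2 * n / t) := by
  have : NeZero n := ⟨by omega⟩
  have hm := Nat.mul_div_cancel' htdvd
  rw [isPerfectCodeOfGroup_iff_of_normal]
  constructor
  · intro hsq
    by_contra hodd
    obtain ⟨k, hk⟩ := Nat.not_odd_iff_even.mp hodd
    have htn : t ∣ n := ⟨k, by rw [hk, mul_add] at hm; omega⟩
    obtain ⟨g, hg, hne⟩ := QuaternionGroup.exists_sq_mem_forall_mul_sq_ne_one htn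
    obtain ⟨h, hh, hgh⟩ := hsq g hg
    exact hne h hh hgh
  · exact fun hodd g hg => QuaternionGroup.exists_mul_sq_eq_one_of_odd hm.symm hodd hg

/-- In the generalized quaternion group `Q_{4n}` (`n ≥ 2`), for a positive divisor `t`
of `2n`, the subgroup `⟨x^t⟩` is a perfect code of `Q_{4n}` iff `2n/t` is odd. -/
theorem quaternion_cyclic_subgroup_perfect_code_iff (n : ℕ) (hn : 2 ≤ n)
    (t : ℕ) (ht : 0 < t) (htdvd : t ∣ 2 * n) :
    IsPerfectCodeOfGroup (QuaternionGroup n)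
        ((Subgroup.zpowers ((QuaternionGroup.a (1 : ZMod (2 * n))) ^ t)) : Set (QuaternionGroup n)) ↔
      Odd (2 * n / t) :=
  quaternion_cyclic_subgroup_perfect_code_iff_general n hn t htdvd
end

section
/- Let G be a finite group and H a proper subgroup of G. Then H is a perfect code of G if and only if there exists a right transversal T of H in G such that e ∈ T and T is inverse-closed (T⁻¹ = T). -/
/-- `T` is a right transversal of `H` in `G`: it contains exactly one element of each
right coset `Hg`. -/
def IsRightTransversal {G : Type*} [Group G] (H : Subgroup G) (T : Set G) : Prop :=
  ∀ g : G, ∃! t, t ∈ T ∧ t * g⁻¹ ∈ H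


lemma mem_of_inv_closed {G : Type*} [Group G] {S : Set G} (hS : S⁻¹ = S) (a : G) :
    a⁻¹ ∈ S ↔ a ∈ S := by
  conv_lhs => rw [← hS]
  exact Set.inv_mem_inv

lemma cayley_adj {G : Type*} [Group G] {S : Set G} (hS : S⁻¹ = S) (x y : G) :
    (cayley G S).Adj x y ↔ x ≠ y ∧ y * x⁻¹ ∈ S := by
  simp only [cayley, SimpleGraph.fromRel_adj]
  constructor
  · rintro ⟨hne, h | h⟩
    · exact ⟨hne, h⟩
    · refine ⟨hne, ?_⟩
      have := (mem_of_inv_closed hS (x * y⁻¹)).2 h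
      simpa [mul_inv_rev] using this
  · rintro ⟨hne, h⟩
    exact ⟨hne, Or.inl h⟩

/-- A proper subgroup `H` of a finite group `G` is a perfect code of `G` iff there is a
right transversal of `H` in `G` containing `1` which is inverse-closed. -/
theorem perfect_code_iff_inverse_closed_transversal (G : Type*) [Group G] [Fintype G]
    (H : Subgroup G) (hH : H ≠ ⊤) :
    IsPerfectCodeOfGroup G (H : Set G) ↔
      ∃ T : Set G, IsRightTransversal H T ∧ (1 : G) ∈ T ∧ T⁻¹ = T := by
  constructor
  · rintro ⟨S, hS, hS1, hind, hcode⟩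
    refine ⟨insert 1 S, ?_, Set.mem_insert _ _, ?_⟩
    · -- S is disjoint from H
      have hSH : ∀ s ∈ S, s ∉ H := by
        intro s hsS hsH
        have hsne : s ≠ 1 := fun h => hS1 (h ▸ hsS)
        exact hind 1 H.one_mem s hsH
          ((cayley_adj hS 1 s).2 ⟨fun h => hsne h.symm, by simpa using hsS⟩)
      intro g
      by_cases hg : g ∈ H
      · refine ⟨1, ⟨Set.mem_insert _ _, by simpa using H.inv_mem hg⟩, ?_⟩
        rintro t ⟨htT, htH⟩
        rcases htT with rfl | htS
        · rfl
        · exact absurd (by simpa using H.mul_mem htH hg) (hSH t htS)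
      · have hginv : g⁻¹ ∉ (H : Set G) := fun h => hg (by simpa using H.inv_mem h)
        obtain ⟨u, ⟨huH, huAdj⟩, huniq⟩ := hcode g⁻¹ hginv
        have hug : u * g ∈ S := by
          have := ((cayley_adj hS g⁻¹ u).1 huAdj).2
          simpa using this
        refine ⟨u * g, ⟨Set.mem_insert_of_mem _ hug, by simpa using huH⟩, ?_⟩
        rintro t ⟨htT, htH⟩
        rcases htT with rfl | htS
        · exact absurd (by simpa using htH) hg
        · have hu' : (t * g⁻¹) ∈ (H : Set G) := htH
          have hAdj : (cayley G S).Adj g⁻¹ (t * g⁻¹) := by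
            refine (cayley_adj hS g⁻¹ (t * g⁻¹)).2 ⟨?_, by simpa [mul_assoc] using htS⟩
            intro h
            exact hginv (h ▸ hu')
          have := huniq (t * g⁻¹) ⟨hu', hAdj⟩
          have : t = u * g := by
            have h2 := congrArg (· * g) this
            simpa [mul_assoc] using h2
          exact this
    · ext a
      simp only [Set.mem_inv, Set.mem_insert_iff, inv_eq_one]
      rw [mem_of_inv_closed hS]
  · rintro ⟨T, hT, hT1, hTinv⟩
    have hSinv : (T \ {1} : Set G)⁻¹ = T \ {1} := by
      ext a
      simp only [Set.mem_inv, Set.mem_diff, Set.mem_singleton_iff, inv_eq_one]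
      rw [mem_of_inv_closed hTinv]
    refine ⟨T \ {1}, hSinv, by simp, ?_, ?_⟩
    · -- independence
      intro u huH v hvH hAdj
      obtain ⟨hne, hmem⟩ := (cayley_adj hSinv u v).1 hAdj
      obtain ⟨hvuT, hvune⟩ := hmem
      obtain ⟨t, _, huniq⟩ := hT 1
      have h1 : (1 : G) = t := huniq 1 ⟨hT1, by simpa using H.one_mem⟩
      have h2 : v * u⁻¹ = t := huniq _ ⟨hvuT, by simpa using H.mul_mem hvH (H.inv_mem huH)⟩
      exact hvune (h2.trans h1.symm)
    · -- coverage
      intro v hvH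
      obtain ⟨t, ⟨htT, htH⟩, huniq⟩ := hT v⁻¹
      have htv : t * v ∈ H := by simpa using htH
      have htne : t ≠ 1 := by
        rintro rfl
        exact hvH (by simpa using htv)
      refine ⟨t * v, ⟨htv, ?_⟩, ?_⟩
      · refine (cayley_adj hSinv v (t * v)).2 ⟨?_, ?_⟩
        · intro h
          apply htne
          have := congrArg (· * v⁻¹) h
          simpa using this.symm
        · simpa [mul_assoc] using (⟨htT, htne⟩ : t ∈ T \ {1})
      · rintro u' ⟨hu'H, hAdj⟩
        obtain ⟨hne, hmem⟩ := (cayley_adj hSinv v u').1 hAdj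
        have h' : u' * v⁻¹ = t :=
          huniq (u' * v⁻¹) ⟨hmem.1, by simpa [mul_assoc] using hu'H⟩
        have := congrArg (· * v) h'
        simpa using this
end
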